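/- arXiv:1901.05594 — 4 statements merged into one kernel-verified Lean document; each statement's English description precedes it below -/
import Mathlib

section
/- If a graph G has a k-queue layout, and (V_0, V_1, ..., V_t) is a layering of G (i.e., every edge has its endpoints in the same layer or in consecutive layers), then G has a 3k-queue layout whose vertex ordering places all of V_0 first, then V_1, ..., then V_t, with each layer internally ordered as in the original k-queue layout. -/
/-!
Order the vertices layer by layer, each layer in its original order. An edge either lies inside
one layer, or joins consecutive layers with its lower endpoint earlier in the original order
(forward), or later (backward). Two nested edges of the same kind use the same two layers, so
their nesting is inherited from the original order (reversed for backward edges), and splitting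
each original queue into these three kinds gives `3k` queues.
-/

/-- Edges `vw` and `xy` in the same queue must not be nested:
`pos v < pos x < pos y < pos w` is forbidden whenever both pairs are edges
assigned the same queue. -/
def NoNestedPair {V : Type} (G : SimpleGraph V) (pos : V → ℕ) (q : Sym2 V → ℕ) : Prop :=
  ∀ v w x y : V, G.Adj v w → G.Adj x y → q s(v, w) = q s(x, y) →
    ¬ (pos v < pos x ∧ pos x < pos y ∧ pos y < pos w)

/-- `G` has a `k`-queue layout: an injective vertex ordering `pos : V → ℕ` and an
assignment of each edge to one of `k` queues such that no two edges in the same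
queue are nested. -/
def HasQueueLayout {V : Type} (G : SimpleGraph V) (k : ℕ) : Prop :=
  ∃ (pos : V → ℕ) (q : Sym2 V → ℕ), Function.Injective pos ∧
    (∀ e ∈ G.edgeSet, q e < k) ∧ NoNestedPair G pos q

theorem mul_add_lt_mul_add_iff_lex {N a b c d : ℕ} (hc : c < N) (hd : d < N) :
    a * N + c < b * N + d ↔ a < b ∨ a = b ∧ c < d := by
  constructor
  · intro h
    rcases lt_trichotomy a b with hab | rfl | hab
    · exact Or.inl hab
    · exact Or.inr ⟨rfl, by omega⟩
    · have : (b + 1) * N ≤ a * N := Nat.mul_le_mul_right N hab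
      nlinarith
  · rintro (hab | ⟨rfl, hcd⟩)
    · have : (a + 1) * N ≤ b * N := Nat.mul_le_mul_right N hab
      nlinarith
    · omega

namespace QueueLayout

variable {V : Type}

def IsLayerwiseOrder (L pos pos' : V → ℕ) : Prop :=
  ∀ v w, pos' v < pos' w ↔ L v < L w ∨ L v = L w ∧ pos v < pos w

theorem exists_isLayerwiseOrder [Finite V] (L pos : V → ℕ) :
    ∃ pos', IsLayerwiseOrder L pos pos' := by
  obtain ⟨N, hN⟩ : ∃ N, ∀ v, pos v < N := by
    cases isEmpty_or_nonempty V
    · exact ⟨0, isEmptyElim⟩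
    · obtain ⟨M, hM⟩ := Finite.exists_le pos
      exact ⟨M + 1, fun v => Nat.lt_succ_of_le (hM v)⟩
  exact ⟨fun v => L v * N + pos v, fun v w => mul_add_lt_mul_add_iff_lex (hN v) (hN w)⟩

theorem IsLayerwiseOrder.injective {L pos pos' : V → ℕ} (hord : IsLayerwiseOrder L pos pos')
    (hpos : Function.Injective pos) : Function.Injective pos' := by
  intro v w h
  have hvw := hord v w
  have hwv := hord w v
  simp only [h, lt_irrefl, false_iff] at hvw hwv
  exact hpos (by omega)

/-- `0` for an edge inside a layer, `1` for a forward and `2` for a backward edge between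
layers. -/
def layerClass (L pos : V → ℕ) (v w : V) : ℕ :=
  if L v = L w then 0
  else if L v < L w ∧ pos v < pos w ∨ L w < L v ∧ pos w < pos v then 1
  else 2

theorem layerClass_comm (L pos : V → ℕ) (v w : V) :
    layerClass L pos v w = layerClass L pos w v := by
  unfold layerClass
  split_ifs <;> omega

theorem layerClass_le_two (L pos : V → ℕ) (v w : V) : layerClass L pos v w ≤ 2 := by
  unfold layerClass
  split_ifs <;> omega

def layeredQueue (L pos : V → ℕ) (q : Sym2 V → ℕ) : Sym2 V → ℕ :=
  Sym2.lift ⟨fun v w => 3 * q s(v, w) + layerClass L pos v w, fun v w => by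
    dsimp only
    rw [Sym2.eq_swap, layerClass_comm]⟩

theorem layeredQueue_mk (L pos : V → ℕ) (q : Sym2 V → ℕ) (v w : V) :
    layeredQueue L pos q s(v, w) = 3 * q s(v, w) + layerClass L pos v w :=
  rfl

theorem layeredQueue_lt {L pos : V → ℕ} {q : Sym2 V → ℕ} {k : ℕ} {e : Sym2 V} (he : q e < k) :
    layeredQueue L pos q e < 3 * k := by
  induction e using Sym2.ind with
  | h v w =>
    have := layerClass_le_two L pos v w
    rw [layeredQueue_mk]
    omega

theorem IsLayerwiseOrder.nested_of_nested {L pos pos' : V → ℕ}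
    (hord : IsLayerwiseOrder L pos pos') {v w x y : V}
    (hLvw : L v ≤ L w + 1 ∧ L w ≤ L v + 1) (hLxy : L x ≤ L y + 1 ∧ L y ≤ L x + 1)
    (hvw : pos v ≠ pos w) (hxy : pos x ≠ pos y)
    (hclass : layerClass L pos v w = layerClass L pos x y)
    (hnested : pos' v < pos' x ∧ pos' x < pos' y ∧ pos' y < pos' w) :
    (pos v < pos x ∧ pos x < pos y ∧ pos y < pos w) ∨
      (pos y < pos w ∧ pos w < pos v ∧ pos v < pos x) := by
  obtain ⟨h₁, h₂, h₃⟩ := hnested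
  -- Equal classes force `L x = L v` and `L y = L w`, and within a layer `pos'` compares by `pos`.
  rw [hord] at h₁ h₂ h₃
  unfold layerClass at hclass
  split_ifs at hclass <;> omega

theorem NoNestedPair.layeredQueue {G : SimpleGraph V} {pos pos' L : V → ℕ} {q : Sym2 V → ℕ}
    (hnest : NoNestedPair G pos q) (hpos : Function.Injective pos)
    (hL : ∀ v w : V, G.Adj v w → L v ≤ L w + 1 ∧ L w ≤ L v + 1)
    (hord : IsLayerwiseOrder L pos pos') : NoNestedPair G pos' (layeredQueue L pos q) := by
  intro v w x y hvw hxy hq hnested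
  rw [layeredQueue_mk, layeredQueue_mk] at hq
  have := layerClass_le_two L pos v w
  have := layerClass_le_two L pos x y
  obtain ⟨hqeq, hclass⟩ :
      q s(v, w) = q s(x, y) ∧ layerClass L pos v w = layerClass L pos x y := by omega
  rcases hord.nested_of_nested (hL v w hvw) (hL x y hxy) (hpos.ne hvw.ne) (hpos.ne hxy.ne)
      hclass hnested with h | h
  · exact hnest v w x y hvw hxy hqeq h
  · exact hnest y x w v hxy.symm hvw.symm (by rw [Sym2.eq_swap, hqeq.symm, Sym2.eq_swap]) h

end QueueLayout

open QueueLayout in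
/-- If a graph `G` has a `k`-queue layout (ordering `pos`, queues `q`), and `L` is a
layering of `G` (endpoints of every edge lie in the same or consecutive layers),
then `G` has a `3k`-queue layout whose vertex ordering `pos'` places layer `0` first,
then layer `1`, etc., with each layer internally ordered as in `pos`. -/
theorem stmt0 {V : Type} [Fintype V] (G : SimpleGraph V) (k : ℕ)
    (pos : V → ℕ) (q : Sym2 V → ℕ)
    (hpos : Function.Injective pos)
    (hq : ∀ e ∈ G.edgeSet, q e < k)
    (hnest : NoNestedPair G pos q)
    (L : V → ℕ)
    (hL : ∀ v w : V, G.Adj v w → L v ≤ L w + 1 ∧ L w ≤ L v + 1) :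
    ∃ (pos' : V → ℕ) (q' : Sym2 V → ℕ),
      Function.Injective pos' ∧
      (∀ v w : V, pos' v < pos' w ↔ (L v < L w ∨ (L v = L w ∧ pos v < pos w))) ∧
      (∀ e ∈ G.edgeSet, q' e < 3 * k) ∧
      NoNestedPair G pos' q' := by
  obtain ⟨pos', hord⟩ := exists_isLayerwiseOrder L pos
  exact ⟨pos', layeredQueue L pos q, hord.injective hpos, hord,
    fun e he => layeredQueue_lt (hq e he), hnest.layeredQueue hpos hL hord⟩
end

section
/- Let G' be a subdivision of a graph G in which every edge of G is subdivided at most c times. If G' has a k-queue layout with vertex ordering ≼, then G has a queue layout with at most (2k/(2k-1))·((2k)^{c+1} - 1) queues using the restriction of ≼ to V(G). In particular, the queues can be grouped so that edges of G subdivided exactly ℓ times use at most (2k)^{ℓ+1} queues. -/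
/-- `G'` together with the data `(ι, n, P)` is a subdivision of `G`: each edge `vw`
of `G` is replaced by a path `P v w 0, P v w 1, …, P v w (n v w + 1)` in `G'` from
`ι v` to `ι w` with `n v w` internal (subdivision) vertices, the internal vertices
are new and distinct (two paths only share a vertex when they are the paths of the
same edge), and every edge of `G'` lies on one of these paths. -/
def IsSubdivision {V V' : Type} (G : SimpleGraph V) (G' : SimpleGraph V')
    (ι : V → V') (n : V → V → ℕ) (P : V → V → ℕ → V') : Prop :=
  Function.Injective ι ∧
  (∀ v w, G.Adj v w → n v w = n w v) ∧
  (∀ v w, G.Adj v w → P v w 0 = ι v ∧ P v w (n v w + 1) = ι w) ∧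
  (∀ v w i, G.Adj v w → i ≤ n v w + 1 → P w v i = P v w (n v w + 1 - i)) ∧
  (∀ v w i, G.Adj v w → i ≤ n v w → G'.Adj (P v w i) (P v w (i + 1))) ∧
  (∀ v w i j, G.Adj v w → i ≤ n v w + 1 → j ≤ n v w + 1 → P v w i = P v w j → i = j) ∧
  (∀ v w i u, G.Adj v w → 1 ≤ i → i ≤ n v w → P v w i ≠ ι u) ∧
  (∀ v w x y i j, G.Adj v w → G.Adj x y → 1 ≤ i → i ≤ n v w → 1 ≤ j → j ≤ n x y →
      P v w i = P x y j → s(v, w) = s(x, y)) ∧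
  (∀ a b, G'.Adj a b → ∃ v w i, G.Adj v w ∧ i ≤ n v w ∧
      ((P v w i = a ∧ P v w (i + 1) = b) ∨ (P v w i = b ∧ P v w (i + 1) = a)))

private lemma aux_sum_lt (b : ℕ) (hb : 1 ≤ b) :
    ∀ (m : ℕ) (d : ℕ → ℕ), (∀ i, i < m → d i < b) →
      ∑ i ∈ Finset.range m, d i * b ^ i < b ^ m := by
  intro m
  induction m with
  | zero => intro d _; simp
  | succ m ih =>
    intro d hd
    rw [Finset.sum_range_succ]
    have h1 : ∑ i ∈ Finset.range m, d i * b ^ i < b ^ m :=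
      ih d (fun i hi => hd i (by omega))
    have h2 : d m * b ^ m ≤ (b - 1) * b ^ m :=
      Nat.mul_le_mul_right _ (by have := hd m (by omega); omega)
    have h3 : b ^ m + (b - 1) * b ^ m = b ^ (m + 1) := by
      have hb' : 1 + (b - 1) = b := by omega
      calc b ^ m + (b - 1) * b ^ m = (1 + (b - 1)) * b ^ m := by ring
        _ = b * b ^ m := by rw [hb']
        _ = b ^ (m + 1) := by rw [pow_succ, mul_comm]
    linarith

private lemma aux_digits (b : ℕ) (hb : 0 < b) :
    ∀ (m : ℕ) (d e : ℕ → ℕ), (∀ i, i < m → d i < b) → (∀ i, i < m → e i < b) →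
      (∑ i ∈ Finset.range m, d i * b ^ i = ∑ i ∈ Finset.range m, e i * b ^ i) →
      ∀ i, i < m → d i = e i := by
  intro m
  induction m with
  | zero => intro d e _ _ _ i hi; omega
  | succ m ih =>
    intro d e hd he hsum i hi
    rw [Finset.sum_range_succ', Finset.sum_range_succ'] at hsum
    have key : ∀ f : ℕ → ℕ, ∑ i ∈ Finset.range m, f (i + 1) * b ^ (i + 1)
        = (∑ i ∈ Finset.range m, f (i + 1) * b ^ i) * b := by
      intro f
      rw [Finset.sum_mul]
      exact Finset.sum_congr rfl fun i _ => by rw [pow_succ, mul_assoc]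
    rw [key d, key e, pow_zero, mul_one, mul_one] at hsum
    have hmod : ∀ S x : ℕ, x < b → (S * b + x) % b = x := by
      intro S x hx
      rw [mul_comm, Nat.add_comm, Nat.add_mul_mod_self_left]
      exact Nat.mod_eq_of_lt hx
    have hd0 : d 0 = e 0 := by
      have h1 := congrArg (· % b) hsum
      rwa [hmod _ _ (hd 0 (by omega)), hmod _ _ (he 0 (by omega))] at h1
    have hST : (∑ i ∈ Finset.range m, d (i + 1) * b ^ i)
        = (∑ i ∈ Finset.range m, e (i + 1) * b ^ i) := by
      rw [hd0] at hsum
      have := Nat.add_right_cancel hsum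
      exact Nat.eq_of_mul_eq_mul_right hb this
    have htail := ih (fun i => d (i + 1)) (fun i => e (i + 1))
      (fun i hi => hd (i + 1) (by omega)) (fun i hi => he (i + 1) (by omega)) hST
    cases i with
    | zero => exact hd0
    | succ j => exact htail j (by omega)

/-- The digit assigned to step `i` of the subdivision path of `vw`: the queue of the
`i`-th path edge in the layout of `G'` together with its direction. -/
private def digF {V V' : Type} (pos' : V' → ℕ) (q' : Sym2 V' → ℕ)
    (P : V → V → ℕ → V') (v w : V) (i : ℕ) : ℕ :=
  2 * q' s(P v w i, P v w (i + 1)) +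
    (if pos' (P v w i) < pos' (P v w (i + 1)) then 0 else 1)

/-- The base-`2k` code of the signature of the edge `vw`. -/
private def codeF {V V' : Type} (pos' : V' → ℕ) (q' : Sym2 V' → ℕ)
    (P : V → V → ℕ → V') (n : V → V → ℕ) (k : ℕ) (v w : V) : ℕ :=
  ∑ i ∈ Finset.range (n v w + 1), digF pos' q' P v w i * (2 * k) ^ i

private def offF (k ℓ : ℕ) : ℕ := ∑ m ∈ Finset.range ℓ, (2 * k) ^ (m + 1)


/-- If a `(≤ c)`-subdivision `G'` of `G` has a `k`-queue layout with vertex ordering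
`pos'`, then `G` has a queue layout with at most
`∑_{ℓ=0}^{c} (2k)^{ℓ+1} = (2k/(2k-1))·((2k)^{c+1} − 1)` queues, using the
restriction `pos' ∘ ι` of the ordering to `V(G)`. -/
theorem stmt1 {V V' : Type} [Fintype V'] (G : SimpleGraph V) (G' : SimpleGraph V')
    (ι : V → V') (n : V → V → ℕ) (P : V → V → ℕ → V') (c : ℕ)
    (hsub : IsSubdivision G G' ι n P)
    (hc : ∀ v w, G.Adj v w → n v w ≤ c)
    (k : ℕ) (pos' : V' → ℕ) (q' : Sym2 V' → ℕ)
    (hpos' : Function.Injective pos')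
    (hq' : ∀ e ∈ G'.edgeSet, q' e < k)
    (hnest' : NoNestedPair G' pos' q') :
    ∃ q : Sym2 V → ℕ,
      (∀ e ∈ G.edgeSet, q e < ∑ ℓ ∈ Finset.range (c + 1), (2 * k) ^ (ℓ + 1)) ∧
      NoNestedPair G (pos' ∘ ι) q := by
  classical
  obtain ⟨hι, hns, hP0, hPrev, hPadj, hPinj, hPni, hPsh, hcov⟩ := hsub
  -- the queue assignment for an oriented edge
  set g : V → V → ℕ := fun v w => offF k (n v w) + codeF pos' q' P n k v w with hgdef
  have hF : ∀ v w : V, (if pos' (ι v) ≤ pos' (ι w) then g v w else g w v)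
      = (if pos' (ι w) ≤ pos' (ι v) then g w v else g v w) := by
    intro v w
    rcases lt_trichotomy (pos' (ι v)) (pos' (ι w)) with h | h | h
    · rw [if_pos h.le, if_neg (not_le.mpr h)]
    · have hvw : v = w := hι (hpos' h)
      subst hvw; rfl
    · rw [if_neg (not_le.mpr h), if_pos h.le]
  -- digits are less than the base 2k
  have hdig : ∀ v w, G.Adj v w → ∀ i, i < n v w + 1 → digF pos' q' P v w i < 2 * k := by
    intro v w hvw i hi
    have hadj := hPadj v w i hvw (by omega)
    have hqb := hq' s(P v w i, P v w (i + 1)) (G'.mem_edgeSet.mpr hadj)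
    simp only [digF]
    split_ifs <;> omega
  have hkpos : ∀ v w, G.Adj v w → 0 < k := by
    intro v w hvw
    exact lt_of_le_of_lt (Nat.zero_le _)
      (hq' s(P v w 0, P v w 1) (G'.mem_edgeSet.mpr (hPadj v w 0 hvw (Nat.zero_le _))))
  have hcode : ∀ v w, G.Adj v w → codeF pos' q' P n k v w < (2 * k) ^ (n v w + 1) := by
    intro v w hvw
    exact aux_sum_lt (2 * k) (by have := hkpos v w hvw; omega) (n v w + 1)
      (digF pos' q' P v w) (hdig v w hvw)
  have hoffsucc : ∀ ℓ : ℕ, offF k (ℓ + 1) = offF k ℓ + (2 * k) ^ (ℓ + 1) := by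
    intro ℓ; exact Finset.sum_range_succ _ _
  have hoffmono : ∀ a a' : ℕ, a ≤ a' → offF k a ≤ offF k a' := by
    intro a a' h
    exact Finset.sum_le_sum_of_subset (Finset.range_subset_range.mpr h)
  have hg : ∀ v w, G.Adj v w → g v w < ∑ ℓ ∈ Finset.range (c + 1), (2 * k) ^ (ℓ + 1) := by
    intro v w hvw
    have h1 := hcode v w hvw
    have h2 := hoffsucc (n v w)
    have h3 := hoffmono (n v w + 1) (c + 1) (by have := hc v w hvw; omega)
    have h4 : (∑ ℓ ∈ Finset.range (c + 1), (2 * k) ^ (ℓ + 1)) = offF k (c + 1) := rfl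
    simp only [hgdef]
    omega
  refine ⟨Sym2.lift ⟨fun v w => if pos' (ι v) ≤ pos' (ι w) then g v w else g w v, hF⟩, ?_, ?_⟩
  · intro e he
    induction e with
    | _ v w =>
      rw [SimpleGraph.mem_edgeSet] at he
      rw [Sym2.lift_mk]
      show (if pos' (ι v) ≤ pos' (ι w) then g v w else g w v) < _
      split_ifs
      · exact hg v w he
      · exact hg w v he.symm
  · intro v w x y hvw hxy hq hcon
    obtain ⟨h1, h2, h3⟩ := hcon
    simp only [Function.comp_apply] at h1 h2 h3
    rw [Sym2.lift_mk, Sym2.lift_mk] at hq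
    have hq2 : (if pos' (ι v) ≤ pos' (ι w) then g v w else g w v)
        = (if pos' (ι x) ≤ pos' (ι y) then g x y else g y x) := hq
    rw [if_pos (h1.trans (h2.trans h3)).le, if_pos h2.le] at hq2
    clear hq
    rename' hq2 => hq
    simp only [hgdef] at hq
    have hk : 0 < k := hkpos v w hvw
    -- equal lengths
    have hkey : ∀ l1 l2 c1 c2 : ℕ, c1 < (2 * k) ^ (l1 + 1) → l1 < l2 →
        offF k l1 + c1 < offF k l2 + c2 := by
      intro l1 l2 c1 c2 hc1 hl
      have e1 := hoffsucc l1
      have e2 := hoffmono (l1 + 1) l2 hl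
      omega
    have hll : n v w = n x y := by
      rcases lt_trichotomy (n v w) (n x y) with h | h | h
      · exact absurd hq (ne_of_lt (hkey _ _ _ _ (hcode v w hvw) h))
      · exact h
      · exact absurd hq.symm (ne_of_lt (hkey _ _ _ _ (hcode x y hxy) h))
    have hcd : ∑ i ∈ Finset.range (n v w + 1), digF pos' q' P v w i * (2 * k) ^ i
        = ∑ i ∈ Finset.range (n v w + 1), digF pos' q' P x y i * (2 * k) ^ i := by
      have hx : codeF pos' q' P n k x y
          = ∑ i ∈ Finset.range (n v w + 1), digF pos' q' P x y i * (2 * k) ^ i := by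
        simp only [codeF, hll]
      have hv : codeF pos' q' P n k v w
          = ∑ i ∈ Finset.range (n v w + 1), digF pos' q' P v w i * (2 * k) ^ i := rfl
      rw [← hv, ← hx]
      have : offF k (n v w) = offF k (n x y) := by rw [hll]
      omega
    have hdigits := aux_digits (2 * k) (by omega) (n v w + 1)
      (digF pos' q' P v w) (digF pos' q' P x y)
      (hdig v w hvw) (fun i hi => by have := hdig x y hxy i (by omega); exact this) hcd
    -- per-step queue and direction agreement
    have hpair : ∀ i, i < n v w + 1 →
        q' s(P v w i, P v w (i + 1)) = q' s(P x y i, P x y (i + 1)) ∧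
        ((pos' (P v w i) < pos' (P v w (i + 1))) ↔ (pos' (P x y i) < pos' (P x y (i + 1)))) := by
      intro i hi
      have hdd := hdigits i hi
      simp only [digF] at hdd
      constructor
      · split_ifs at hdd <;> omega
      · split_ifs at hdd with hA hB hB
        · exact iff_of_true hA hB
        · omega
        · omega
        · exact iff_of_false hA hB
    -- the inductive walk along the two paths
    have hstep : ∀ i, i ≤ n v w + 1 → pos' (P v w i) < pos' (P x y i) := by
      intro i
      induction i with
      | zero =>
        intro _
        rw [(hP0 v w hvw).1, (hP0 x y hxy).1]
        exact h1
      | succ i ih =>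
        intro hi
        have hi' : i ≤ n v w := by omega
        have ha : pos' (P v w i) < pos' (P x y i) := ih (by omega)
        have e1 : G'.Adj (P v w i) (P v w (i + 1)) := hPadj v w i hvw hi'
        have e2 : G'.Adj (P x y i) (P x y (i + 1)) := hPadj x y i hxy (by omega)
        obtain ⟨hQ, hD⟩ := hpair i (by omega)
        have hle : pos' (P v w (i + 1)) ≤ pos' (P x y (i + 1)) := by
          by_cases hdv : pos' (P v w i) < pos' (P v w (i + 1))
          · by_contra hlt
            push_neg at hlt
            exact hnest' _ _ _ _ e1 e2 hQ ⟨ha, hD.mp hdv, hlt⟩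
          · have hne : P v w i ≠ P v w (i + 1) := fun hh => by
              have := hPinj v w i (i + 1) hvw (by omega) (by omega) hh; omega
            have hdv' : pos' (P v w (i + 1)) < pos' (P v w i) :=
              lt_of_le_of_ne (not_lt.mp hdv) (fun hh => hne (hpos' hh.symm))
            have hnotx : ¬ pos' (P x y i) < pos' (P x y (i + 1)) := fun hh => hdv (hD.mpr hh)
            by_contra hlt
            push_neg at hlt
            have hQ' : q' s(P x y (i + 1), P x y i) = q' s(P v w (i + 1), P v w i) := by
              rw [show (s(P x y (i + 1), P x y i) : Sym2 V') = s(P x y i, P x y (i + 1)) from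
                Sym2.eq_swap,
                show (s(P v w (i + 1), P v w i) : Sym2 V') = s(P v w i, P v w (i + 1)) from
                Sym2.eq_swap]
              exact hQ.symm
            exact hnest' _ _ _ _ e2.symm e1.symm hQ' ⟨hlt, hdv', ha⟩
        have hne3 : pos' (P v w (i + 1)) ≠ pos' (P x y (i + 1)) := by
          intro hh
          have heqv : P v w (i + 1) = P x y (i + 1) := hpos' hh
          by_cases hcase : i < n v w
          · have hsh := hPsh v w x y (i + 1) (i + 1) hvw hxy (by omega) (by omega)
              (by omega) (by omega) heqv
            rw [Sym2.eq_iff] at hsh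
            rcases hsh with ⟨rfl, rfl⟩ | ⟨rfl, rfl⟩
            · exact absurd h1 (lt_irrefl _)
            · exact absurd (h1.trans h2) (lt_irrefl _)
          · have hiv : i = n v w := by omega
            have hw : P v w (i + 1) = ι w := by rw [hiv]; exact (hP0 v w hvw).2
            have hy : P x y (i + 1) = ι y := by
              rw [hiv, hll]; exact (hP0 x y hxy).2
            rw [hw, hy] at heqv
            rw [heqv] at h3
            exact absurd h3 (lt_irrefl _)
        exact lt_of_le_of_ne hle hne3
    have hfin := hstep (n v w + 1) le_rfl
    rw [(hP0 v w hvw).2] at hfin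
    have hy' : P x y (n v w + 1) = ι y := by rw [hll]; exact (hP0 x y hxy).2
    rw [hy'] at hfin
    exact absurd (h3.trans hfin) (lt_irrefl _)
end

section
/- Let ≼ be a linear order on a vertex set, and suppose edges are partitioned into parts in which no two edges are nested. Fix ℓ ≥ 0, and for each edge vw with v ≺ w that corresponds to a path v = x_0, x_1, ..., x_{ℓ+1} = w, record the sign vector f(vw) = (sign(x_0,x_1), ..., sign(x_ℓ,x_{ℓ+1})) (where sign(a,b) = +1 if a ≺ b, else −1) and the queue vector q(vw) listing the queues of the path edges. Then any two vertex-disjoint such edges vw and pq with f(vw) = f(pq) and q(vw) = q(pq) are not nested with respect to ≼ restricted to their endpoints. -/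
/-!
Walk along the two paths in parallel. If `x i ≺ y i`, then `x (i+1) ≺ y (i+1)`: otherwise the
`i`-th edges of the two paths, which lie in the same queue and point in the same direction,
would be nested. Hence the order of the start vertices is inherited by the end vertices, which
is incompatible with nesting.
-/

namespace NoNestedPair

variable {V : Type} {G : SimpleGraph V} {pos : V → ℕ} {q : Sym2 V → ℕ}

theorem lt_of_lt_of_sameDirection (hnest : NoNestedPair G pos q) (hpos : Function.Injective pos)
    {a b c d : V} (hab : G.Adj a b) (hcd : G.Adj c d) (hq : q s(a, b) = q s(c, d))
    (hdir : pos a < pos b ↔ pos c < pos d) (hac : pos a < pos c) (hbd : b ≠ d) :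
    pos b < pos d := by
  by_contra! hdb
  replace hdb : pos d < pos b := lt_of_le_of_ne hdb (hpos.ne hbd.symm)
  by_cases hforward : pos a < pos b
  · exact hnest a b c d hab hcd hq ⟨hac, hdir.mp hforward, hdb⟩
  · have hba : pos b < pos a := lt_of_le_of_ne (not_lt.mp hforward) (hpos.ne hab.ne.symm)
    -- both edges point backwards, and `d ≺ b ≺ a ≺ c` nests `ba` inside `dc`
    exact hnest d c b a hcd.symm hab.symm (by rw [Sym2.eq_swap, ← hq, Sym2.eq_swap])
      ⟨hdb, hba, hac⟩

theorem lt_of_lt_of_parallelPaths (hnest : NoNestedPair G pos q)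
    (hpos : Function.Injective pos) {ℓ : ℕ} {x y : ℕ → V}
    (hxadj : ∀ i ≤ ℓ, G.Adj (x i) (x (i + 1)))
    (hyadj : ∀ i ≤ ℓ, G.Adj (y i) (y (i + 1)))
    (hne : ∀ i ≤ ℓ + 1, x i ≠ y i)
    (hdir : ∀ i ≤ ℓ, (pos (x i) < pos (x (i + 1)) ↔ pos (y i) < pos (y (i + 1))))
    (hqvec : ∀ i ≤ ℓ, q s(x i, x (i + 1)) = q s(y i, y (i + 1)))
    (h0 : pos (x 0) < pos (y 0)) :
    ∀ i ≤ ℓ + 1, pos (x i) < pos (y i)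
  | 0, _ => h0
  | i + 1, hi =>
    have hiℓ : i ≤ ℓ := Nat.le_of_succ_le_succ hi
    hnest.lt_of_lt_of_sameDirection hpos (hxadj i hiℓ) (hyadj i hiℓ) (hqvec i hiℓ) (hdir i hiℓ)
      (lt_of_lt_of_parallelPaths hnest hpos hxadj hyadj hne hdir hqvec h0 i (Nat.le_succ_of_le hiℓ))
      (hne (i + 1) hi)

theorem not_nested_of_parallelPaths (hnest : NoNestedPair G pos q)
    (hpos : Function.Injective pos) {ℓ : ℕ} {x y : ℕ → V}
    (hxadj : ∀ i ≤ ℓ, G.Adj (x i) (x (i + 1)))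
    (hyadj : ∀ i ≤ ℓ, G.Adj (y i) (y (i + 1)))
    (hne : ∀ i ≤ ℓ + 1, x i ≠ y i)
    (hdir : ∀ i ≤ ℓ, (pos (x i) < pos (x (i + 1)) ↔ pos (y i) < pos (y (i + 1))))
    (hqvec : ∀ i ≤ ℓ, q s(x i, x (i + 1)) = q s(y i, y (i + 1))) :
    ¬ (pos (x 0) < pos (y 0) ∧ pos (y (ℓ + 1)) < pos (x (ℓ + 1))) := fun ⟨h0, hend⟩ =>
  (hnest.lt_of_lt_of_parallelPaths hpos hxadj hyadj hne hdir hqvec h0 (ℓ + 1) le_rfl).asymm hend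

end NoNestedPair

theorem stmt2_general {V : Type} (G : SimpleGraph V) (pos : V → ℕ)
    (hpos : Function.Injective pos)
    (q : Sym2 V → ℕ) (hnest : NoNestedPair G pos q)
    (ℓ : ℕ) (x y : ℕ → V)
    (hxadj : ∀ i ≤ ℓ, G.Adj (x i) (x (i + 1)))
    (hyadj : ∀ i ≤ ℓ, G.Adj (y i) (y (i + 1)))
    (hdisj : ∀ i ≤ ℓ + 1, ∀ j ≤ ℓ + 1, x i ≠ y j)
    (hsign : ∀ i ≤ ℓ, (pos (x i) < pos (x (i + 1)) ↔ pos (y i) < pos (y (i + 1))))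
    (hqvec : ∀ i ≤ ℓ, q s(x i, x (i + 1)) = q s(y i, y (i + 1))) :
    ¬ (pos (x 0) < pos (y 0) ∧ pos (y (ℓ + 1)) < pos (x (ℓ + 1))) ∧
    ¬ (pos (y 0) < pos (x 0) ∧ pos (x (ℓ + 1)) < pos (y (ℓ + 1))) :=
  ⟨hnest.not_nested_of_parallelPaths hpos hxadj hyadj (fun i hi => hdisj i hi i hi) hsign hqvec,
    hnest.not_nested_of_parallelPaths hpos hyadj hxadj (fun i hi => (hdisj i hi i hi).symm)
      (fun i hi => (hsign i hi).symm) (fun i hi => (hqvec i hi).symm)⟩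

/-- Let `pos, q` be a queue layout of `G'` (no two edges in the same queue are
nested).  Suppose edges `vw` and `pq` of `G` (with `v ≺ w` and `p ≺ q`) correspond
to vertex-disjoint paths `x 0, …, x (ℓ+1)` and `y 0, …, y (ℓ+1)` in `G'`, whose
corresponding path edges have the same orientation sign vector and the same queue
vector.  Then `vw` and `pq` are not nested in `pos` restricted to their endpoints. -/
theorem stmt2 {V : Type} (G : SimpleGraph V) (pos : V → ℕ)
    (hpos : Function.Injective pos)
    (q : Sym2 V → ℕ) (hnest : NoNestedPair G pos q)
    (ℓ : ℕ) (x y : ℕ → V)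
    (hxadj : ∀ i ≤ ℓ, G.Adj (x i) (x (i + 1)))
    (hyadj : ∀ i ≤ ℓ, G.Adj (y i) (y (i + 1)))
    (hvw : pos (x 0) < pos (x (ℓ + 1)))
    (hpq : pos (y 0) < pos (y (ℓ + 1)))
    (hdisj : ∀ i ≤ ℓ + 1, ∀ j ≤ ℓ + 1, x i ≠ y j)
    (hsign : ∀ i ≤ ℓ, (pos (x i) < pos (x (i + 1)) ↔ pos (y i) < pos (y (i + 1))))
    (hqvec : ∀ i ≤ ℓ, q s(x i, x (i + 1)) = q s(y i, y (i + 1))) :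
    ¬ (pos (x 0) < pos (y 0) ∧ pos (y (ℓ + 1)) < pos (x (ℓ + 1))) ∧
    ¬ (pos (y 0) < pos (x 0) ∧ pos (x (ℓ + 1)) < pos (y (ℓ + 1))) :=
  stmt2_general G pos hpos q hnest ℓ x y hxadj hyadj hdisj hsign hqvec
end

section
/- Let Δ ≥ 1 and let m : V → ℕ be a function on the vertices of a rooted tree where ℓ(v) denotes a level with ℓ(child) = ℓ(parent) − 1. Suppose that for each internal vertex v and each child y of v we have m(v) ≤ m(y) ≤ m(v) + Δ^{ℓ(v)}. Define g(v) = ⌊m(v) / Δ^{ℓ(v)}⌋. Then for every child y of v: Δ·g(v) ≤ g(y) ≤ Δ·g(v) + 2Δ − 1. -/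
/-- Group-index arithmetic on a rooted tree: levels satisfy `ℓ(v) = t − depth v`
(so `ℓ(child) = ℓ(parent) − 1`), and `m : V → ℕ` satisfies
`m(v) ≤ m(y) ≤ m(v) + Δ^{ℓ(v)}` for every child `y` of `v`.  With
`g(v) = ⌊m(v) / Δ^{ℓ(v)}⌋`, every child `y` of `v` satisfies
`Δ·g(v) ≤ g(y) ≤ Δ·g(v) + 2Δ − 1`. -/
theorem stmt9 {V : Type} (Δ : ℕ) (hΔ : 1 ≤ Δ) (r : V) (parent : V → V)
    (depth : V → ℕ)
    (hroot : parent r = r)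
    (hdepth : ∀ v : V, v ≠ r → depth v = depth (parent v) + 1)
    (t : ℕ) (ht : ∀ v : V, depth v ≤ t)
    (m : V → ℕ)
    (hm : ∀ y : V, y ≠ r →
      m (parent y) ≤ m y ∧ m y ≤ m (parent y) + Δ ^ (t - depth (parent y))) :
    ∀ y : V, y ≠ r →
      Δ * (m (parent y) / Δ ^ (t - depth (parent y))) ≤ m y / Δ ^ (t - depth y) ∧
      m y / Δ ^ (t - depth y) ≤ Δ * (m (parent y) / Δ ^ (t - depth (parent y))) + (2 * Δ - 1) := by
  intro y hy
  obtain ⟨h1, h2⟩ := hm y hy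
  have hd := hdepth y hy
  have hty := ht y
  have hL : t - depth (parent y) = (t - depth y) + 1 := by omega
  set L := t - depth y with hLdef
  set v := parent y
  rw [hL] at h2 ⊢
  rw [pow_succ] at h2 ⊢
  have hpos : 0 < Δ ^ L := Nat.pow_pos hΔ
  -- lower bound
  have low : Δ * (m v / (Δ ^ L * Δ)) ≤ m y / Δ ^ L := by
    calc Δ * (m v / (Δ ^ L * Δ)) = Δ * (m v / Δ ^ L / Δ) := by
          rw [Nat.div_div_eq_div_mul]
      _ ≤ m v / Δ ^ L := by
          rw [mul_comm]; exact Nat.div_mul_le_self _ _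
      _ ≤ m y / Δ ^ L := Nat.div_le_div_right h1
  refine ⟨low, ?_⟩
  -- upper bound
  have h3 : m y / Δ ^ L ≤ m v / Δ ^ L + Δ := by
    calc m y / Δ ^ L ≤ (m v + Δ ^ L * Δ) / Δ ^ L := Nat.div_le_div_right h2
      _ = m v / Δ ^ L + Δ := by rw [Nat.add_mul_div_left _ _ hpos]
  have h4 : m v / Δ ^ L ≤ Δ * (m v / Δ ^ L / Δ) + (Δ - 1) := by
    have := Nat.div_add_mod (m v / Δ ^ L) Δ
    have hmod : m v / Δ ^ L % Δ < Δ := Nat.mod_lt _ hΔ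
    omega
  rw [← Nat.div_div_eq_div_mul]
  omega
end
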